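/- Suppose every round of a core-language algorithm has a uni instruction. If round i is preserving with respect to a phase predicate ψ, then {b,?} ⊆ fire_i(bias(θ), ψ) for all sufficiently large θ < 1, and {a,?} ⊆ fire_i(bias(θ), ψ) for all sufficiently small θ > 0. -/

import Mathlib

open Classical

namespace HO

/-! ### Values

`none` is the undefined value `?`; defined values are natural numbers, where
`some 0` plays the role of `a` and `some 1` the role of `b` (so `a < b`). -/

abbrev Val := Option ℕ

def aVal : ℕ := 0
def bVal : ℕ := 1

/-! ### Operations -/

inductive Op where
  | min : Op
  | smor : Op

/-- Minimum of a multiset of defined values (`none` if the multiset is empty). -/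
noncomputable def msMin (S : Multiset ℕ) : Option ℕ :=
  if h : S.toFinset.Nonempty then some (S.toFinset.min' h) else none

/-- Smallest most frequent value of a multiset (`none` if the multiset is empty). -/
noncomputable def msSmor (S : Multiset ℕ) : Option ℕ :=
  if h : (S.toFinset.filter fun v => ∀ w ∈ S.toFinset, S.count w ≤ S.count v).Nonempty
  then some ((S.toFinset.filter fun v => ∀ w ∈ S.toFinset, S.count w ≤ S.count v).min' h)
  else none

noncomputable def Op.apply : Op → Multiset ℕ → Option ℕ
  | Op.min, S => msMin S
  | Op.smor, S => msSmor S

/-! ### Rounds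

A round consists of at most one `uni` instruction followed by a list of `mult`
instructions with non-increasing thresholds, all thresholds lying in `[0,1)`. -/

structure Round where
  uniThr : Option ℝ
  mults : List (ℝ × Op)
  wfU : ∀ t ∈ uniThr, 0 ≤ t ∧ t < 1
  wfM : ∀ q ∈ mults, 0 ≤ q.1 ∧ q.1 < 1
  sorted : (mults.map Prod.fst).Chain' (· ≥ ·)

def Round.hasUni (R : Round) : Prop := R.uniThr.isSome = true
def Round.hasMult (R : Round) : Prop := R.mults ≠ []

/-- `thr_u^i`: the threshold of the uni instruction, `-1` if absent. -/
noncomputable def Round.thrU (R : Round) : ℝ := R.uniThr.getD (-1)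

noncomputable def minThr : List ℝ → ℝ
  | [] => -1
  | [t] => t
  | t :: ts => min t (minThr ts)

/-- `thr_m^{i,k}`: the smallest threshold of a mult instruction, `-1` if absent. -/
noncomputable def Round.thrM (R : Round) : ℝ := minThr (R.mults.map Prod.fst)

/-- Result of the first applicable `mult` instruction. -/
noncomputable def firstMult (n : ℕ) (S : Multiset ℕ) : List (ℝ × Op) → Option ℕ
  | [] => none
  | (t, op) :: rest =>
      if 1 < S.toFinset.card ∧ t * n < (S.card : ℝ) then op.apply S
      else firstMult n S rest

/-- `update_i(H)`: the result of the first instruction of the round whose condition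
is satisfied by `H − {?}`, and `?` (i.e. `none`) if no condition applies. -/
noncomputable def Round.update (R : Round) (n : ℕ) (H : Multiset Val) : Option ℕ :=
  if ∃ t ∈ R.uniThr,
      (H.filterMap id).toFinset.card = 1 ∧ t * n < ((H.filterMap id).card : ℝ)
  then msMin (H.filterMap id)
  else firstMult n (H.filterMap id) R.mults

/-! ### Communication predicates for a round -/

/-- A conjunction of atomic communication predicates for one round: possibly
`φ_=` (field `eq`) and possibly `φ_thr` (field `thr`, with `0 ≤ thr < 1`). -/
structure RoundPred where
  eq : Bool
  thr : Option ℝ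
  wf : ∀ t ∈ thr, 0 ≤ t ∧ t < 1

/-- `thr_i(ψ)`: the threshold appearing in the predicate, `-1` if absent. -/
noncomputable def RoundPred.thrVal (φ : RoundPred) : ℝ := φ.thr.getD (-1)

def RoundPred.isEqualizer (φ : RoundPred) : Prop := φ.eq = true

/-- Satisfaction of a round predicate by a tuple of heard-of multisets. -/
def RoundPred.sat {α : Type} (φ : RoundPred) (n : ℕ) (Hs : Fin n → Multiset α) : Prop :=
  (φ.eq = true → ∀ p q, Hs p = Hs q) ∧
  ∀ t ∈ φ.thr, ∀ p, t * n < ((Hs p).card : ℝ)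

/-- Logical implication between round predicates. -/
def RoundPred.implies (φ φ' : RoundPred) : Prop :=
  ∀ (α : Type) (n : ℕ) (Hs : Fin n → Multiset α), φ.sat n Hs → φ'.sat n Hs

/-! ### Tuples of values -/

/-- The multiset of values of a tuple. -/
def msetOf {n : ℕ} (f : Fin n → Val) : Multiset Val := Finset.univ.val.map f

def soloB (n : ℕ) : Fin n → Val := fun _ => some bVal
def soloA (n : ℕ) : Fin n → Val := fun _ => some aVal
def soloQ (n : ℕ) : Fin n → Val := fun _ => none

/-- `bias(θ)`: a tuple over `{a,b}` with `θ·n` entries equal to `b`. -/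
def isBias {n : ℕ} (θ : ℝ) (f : Fin n → Val) : Prop :=
  (∀ p, f p = some aVal ∨ f p = some bVal) ∧
  ((Finset.univ.filter fun p => f p = some bVal).card : ℝ) = θ * n

/-- `spread = bias(1/2)`. -/
def isSpread {n : ℕ} (f : Fin n → Val) : Prop := isBias (1/2) f

/-- `bias^?(θ)`: a tuple over `{?,b}` with `θ·n` entries equal to `b`. -/
def isBiasQ {n : ℕ} (θ : ℝ) (f : Fin n → Val) : Prop :=
  (∀ p, f p = none ∨ f p = some bVal) ∧
  ((Finset.univ.filter fun p => f p = some bVal).card : ℝ) = θ * n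

/-- `bias_a^?(θ)`: a tuple over `{?,a}` with `θ·n` entries equal to `a`. -/
def isBiasQa {n : ℕ} (θ : ℝ) (f : Fin n → Val) : Prop :=
  (∀ p, f p = none ∨ f p = some aVal) ∧
  ((Finset.univ.filter fun p => f p = some aVal).card : ℝ) = θ * n

/-! ### Round transitions -/

/-- Round transition `f →[φ]_i f'`: every process receives a sub-multiset of the
multiset of sent values, the tuple of heard-of multisets jointly satisfies `φ`,
and every process updates its variable accordingly. -/
def roundTrans (R : Round) (φ : RoundPred) {n : ℕ} (f f' : Fin n → Val) : Prop :=
  ∃ Hs : Fin n → Multiset Val,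
    (∀ p, Hs p ≤ msetOf f) ∧ φ.sat n Hs ∧ ∀ p, f' p = R.update n (Hs p)

/-- `d ∈ fire_i(f,φ)`. -/
def fire (R : Round) (φ : RoundPred) {n : ℕ} (f : Fin n → Val) (d : Val) : Prop :=
  ∃ f' : Fin n → Val, roundTrans R φ f f' ∧ ∃ p, f' p = d

/-! ### Algorithms -/

/-- An algorithm of the core language: rounds `1,…,r` (`r ≥ 2`), with a designated
input-update round `ir` (`1 ≤ ir < r`). -/
structure Algo where
  r : ℕ
  rounds : ℕ → Round
  ir : ℕ
  two_le_r : 2 ≤ r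
  one_le_ir : 1 ≤ ir
  ir_lt_r : ir < r

noncomputable def Algo.thrU (A : Algo) (i : ℕ) : ℝ := (A.rounds i).thrU
noncomputable def Algo.thrM (A : Algo) (i : ℕ) : ℝ := (A.rounds i).thrM
def Algo.hasUni (A : Algo) (i : ℕ) : Prop := (A.rounds i).hasUni
def Algo.hasMult (A : Algo) (i : ℕ) : Prop := (A.rounds i).hasMult

/-- A phase predicate: a conjunction of atomic predicates for every round. -/
abbrev PhasePred := ℕ → RoundPred

/-- Phase transition `(f,d) →ψ (f',d')`. -/
def phaseTrans (A : Algo) (ψ : PhasePred) {n : ℕ} (f d f' d' : Fin n → Val) : Prop :=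
  ∃ g : ℕ → Fin n → Val,
    g 0 = f ∧
    (∀ i, 1 ≤ i → i ≤ A.r → roundTrans (A.rounds i) (ψ i) (g (i - 1)) (g i)) ∧
    (∀ p, f' p = if g A.ir p = none then f p else g A.ir p) ∧
    (∀ p, d' p = if d p = none then g A.r p else d p)

/-- A chain of round transitions for rounds `k,…,l`. -/
def roundChain (A : Algo) (ψ : PhasePred) (k l : ℕ) {n : ℕ} (f f' : Fin n → Val) : Prop :=
  ∃ g : ℕ → Fin n → Val,
    g (k - 1) = f ∧ g l = f' ∧
    ∀ i, k ≤ i → i ≤ l → roundTrans (A.rounds i) (ψ i) (g (i - 1)) (g i)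

/-! ### Syntactic notions -/

/-- Round `i` is preserving w.r.t. `ψ`. -/
def Algo.preserving (A : Algo) (ψ : PhasePred) (i : ℕ) : Prop :=
  ¬ A.hasUni i ∨ ¬ A.hasMult i ∨ (ψ i).thrVal < max (A.thrU i) (A.thrM i)

/-- Round `i` is solo-safe w.r.t. `ψ`. -/
def Algo.soloSafe (A : Algo) (ψ : PhasePred) (i : ℕ) : Prop :=
  0 ≤ A.thrU i ∧ A.thrU i ≤ (ψ i).thrVal

/-- The border threshold `thr̄ = max(1 − thr_u^1, 1 − thr_m^{1,k}/2)`. -/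
noncomputable def Algo.borderThr (A : Algo) : ℝ :=
  max (1 - A.thrU 1) (1 - A.thrM 1 / 2)

/-- `ψ` is a decider: all rounds are solo-safe w.r.t. `ψ`. -/
def Algo.decider (A : Algo) (ψ : PhasePred) : Prop :=
  ∀ i, 1 ≤ i → i ≤ A.r → A.soloSafe ψ i

/-- `ψ` is a unifier. -/
def Algo.unifier (A : Algo) (ψ : PhasePred) : Prop :=
  A.thrM 1 ≤ (ψ 1).thrVal ∧
  (A.thrU 1 ≤ (ψ 1).thrVal ∨ A.borderThr ≤ (ψ 1).thrVal) ∧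
  ∃ i, 1 ≤ i ∧ i ≤ A.ir ∧ (ψ i).isEqualizer ∧
    (∀ j, 2 ≤ j → j ≤ i → ¬ A.preserving ψ j) ∧
    (∀ j, i < j → j ≤ A.ir → A.soloSafe ψ j)

/-- The algorithm is syntactically safe. -/
def Algo.syntSafe (A : Algo) : Prop :=
  A.hasMult 1 ∧
  (∀ i, 1 ≤ i → i ≤ A.r → A.hasUni i) ∧
  (∀ q ∈ (A.rounds 1).mults, q.2 = Op.smor) ∧
  1 - A.thrU (A.ir + 1) ≤ A.thrM 1 / 2 ∧
  1 - A.thrU (A.ir + 1) ≤ A.thrU 1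

/-- Assumption (A) relative to the global predicate `gl`. -/
def Algo.assumptionA (A : Algo) (gl : PhasePred) : Prop :=
  ∀ i, 1 ≤ i → i ≤ A.r →
    (∀ j, 1 ≤ j → j < i → ¬ A.preserving gl j) →
    (A.hasUni i → (gl i).thrVal ≤ A.thrU i) ∧
    (A.hasMult i → (gl i).thrVal ≤ A.thrM i)

/-- Proviso (P): the global predicate has no equalizer and round `ir+1` has no
mult instruction. -/
def Algo.provisoP (A : Algo) (gl : PhasePred) : Prop :=
  (∀ i, 1 ≤ i → i ≤ A.r → ¬ (gl i).isEqualizer) ∧ ¬ A.hasMult (A.ir + 1)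

/-- Removing all mult instructions of a round. -/
def Round.dropMults (R : Round) : Round :=
  { uniThr := R.uniThr, mults := [], wfU := R.wfU,
    wfM := by simp, sorted := by first | exact List.IsChain.nil | simp [List.Chain'] | constructor }

/-- Removing all mult instructions of round `i` of an algorithm. -/
def Algo.dropMultsAt (A : Algo) (i : ℕ) : Algo :=
  { A with rounds := fun j => if j = i then (A.rounds j).dropMults else A.rounds j }

/-! ### Communication predicates, executions, consensus -/

/-- A communication predicate `(G ψ̄) ∧ F(ψ^1 ∧ F(ψ^2 ∧ … ∧ F ψ^k))`:
a global phase predicate and sporadic phase predicates `ψ^1,…,ψ^k`. -/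
structure CommPred where
  glob : PhasePred
  k : ℕ
  spor : ℕ → PhasePred

/-- Roundwise implication between phase predicates of an algorithm. -/
def predImplies (A : Algo) (ψ ψ' : PhasePred) : Prop :=
  ∀ i, 1 ≤ i → i ≤ A.r → (ψ i).implies (ψ' i)

/-- An execution of an algorithm respecting a communication predicate: an infinite
sequence of phase transitions under the global predicate, together with an
increasing sequence of times at which the sporadic predicates hold. -/
structure Exec (A : Algo) (C : CommPred) (n : ℕ) where
  inp : ℕ → Fin n → Val
  dec : ℕ → Fin n → Val
  inp0 : ∀ p, inp 0 p ≠ none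
  dec0 : ∀ p, dec 0 p = none
  step : ∀ s, phaseTrans A C.glob (inp s) (dec s) (inp (s + 1)) (dec (s + 1))
  sporTime : ℕ → ℕ
  mono : StrictMono sporTime
  sporStep : ∀ i, 1 ≤ i → i ≤ C.k →
    phaseTrans A (C.spor i) (inp (sporTime i)) (dec (sporTime i))
      (inp (sporTime i + 1)) (dec (sporTime i + 1))

/-- Agreement: in every reachable state, any two non-`?` decision values coincide. -/
def Agreement (A : Algo) (C : CommPred) : Prop :=
  ∀ n, 0 < n → ∀ E : Exec A C n, ∀ s p q v w,
    E.dec s p = some v → E.dec s q = some w → v = w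

/-- Termination: every execution reaches a state where all processes have decided. -/
def Termination (A : Algo) (C : CommPred) : Prop :=
  ∀ n, 0 < n → ∀ E : Exec A C n, ∃ s, ∀ p, E.dec s p ≠ none

/-- Solving consensus: agreement and termination. -/
def SolvesConsensus (A : Algo) (C : CommPred) : Prop :=
  Agreement A C ∧ Termination A C

/-! A process that hears only copies of one value `v`, more of them than the uni threshold and
the threshold of `ψ` demand, adopts `v`; this is possible as soon as `v` is held by more than
the fraction `c = max(thr_u, thr_m, thr(ψ)) < 1` of the processes, which dictates both ranges
of `θ`. To produce `?`, preservation leaves room for a heard-of multiset that satisfies `ψ` but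
triggers no instruction: without mult instructions, hear both values; without a threshold in `ψ`,
hear nothing; if `thr(ψ) < thr_u`, hear `⌊thr_u n⌋` copies of one value; if `thr(ψ) < thr_m`,
hear about `thr_m n` processes holding both values. The last two need `n` large enough for an
integer to fit into the gap between the thresholds. -/

open Filter

theorem _root_.Multiset.filterMap_id_map_some {α : Type*} (s : Multiset α) :
    (s.map some).filterMap id = s := by
  rw [Multiset.filterMap_map]; exact Multiset.filterMap_some s

lemma count_msetOf {n : ℕ} (f : Fin n → Val) (x : Val) :
    (msetOf f).count x = (Finset.univ.filter fun p => f p = x).card := by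
  rw [msetOf, Multiset.count_map, Finset.card_def, Finset.filter_val]
  exact congrArg Multiset.card (Multiset.filter_congr fun _ _ => eq_comm)

lemma card_msetOf {n : ℕ} (f : Fin n → Val) : Multiset.card (msetOf f) = n := by
  simp [msetOf]

lemma pos_of_count_msetOf_pos {n : ℕ} {f : Fin n → Val} {x : Val}
    (h : 0 < (msetOf f).count x) : 0 < n :=
  card_msetOf f ▸ h.trans_le (Multiset.count_le_card x _)

lemma minThr_le {L : List ℝ} {t : ℝ} (h : t ∈ L) : minThr L ≤ t := by
  induction L with
  | nil => simp at h
  | cons s L ih =>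
    cases L with
    | nil => simp_all [minThr]
    | cons s' L' =>
      rcases List.mem_cons.mp h with rfl | h
      · exact min_le_left _ _
      · exact (min_le_right _ _).trans (ih h)

lemma Round.thrM_le {R : Round} {q : ℝ × Op} (hq : q ∈ R.mults) : R.thrM ≤ q.1 :=
  minThr_le (List.mem_map_of_mem hq)

lemma Round.thrM_lt_one (R : Round) : R.thrM < 1 := by
  rcases h : R.mults with - | ⟨q, L⟩
  · simp [Round.thrM, h, minThr]
  · have hq : q ∈ R.mults := h ▸ List.mem_cons_self
    exact (R.thrM_le hq).trans_lt (R.wfM q hq).2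

lemma RoundPred.thrVal_eq {φ : RoundPred} {t : ℝ} (ht : t ∈ φ.thr) : φ.thrVal = t := by
  simp [RoundPred.thrVal, Option.mem_def.1 ht]

lemma RoundPred.thrVal_lt_one (φ : RoundPred) : φ.thrVal < 1 := by
  rcases h : φ.thr with - | t
  · simp [RoundPred.thrVal, h]
  · rw [thrVal_eq h]; exact (φ.wf t h).2

lemma firstMult_eq_none {n : ℕ} {S : Multiset ℕ} {L : List (ℝ × Op)}
    (h : ∀ q ∈ L, 1 < S.toFinset.card → (S.card : ℝ) ≤ q.1 * n) : firstMult n S L = none := by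
  induction L with
  | nil => rfl
  | cons q L ih =>
    rw [firstMult, if_neg fun hq => (h q List.mem_cons_self hq.1).not_gt hq.2]
    exact ih fun q hq => h q (List.mem_cons_of_mem _ hq)

namespace Round

variable (R : Round) {n : ℕ}

lemma update_replicate_of_lt {t : ℝ} (ht : t ∈ R.uniThr) {m : ℕ} (hm : 0 < m)
    (htm : t * n < m) (x : ℕ) : R.update n (Multiset.replicate m (some x)) = some x := by
  have hcard : (Multiset.replicate m x).toFinset.card = 1 := by
    simp [Multiset.toFinset_replicate, hm.ne']
  rw [update, ← Multiset.map_replicate, Multiset.filterMap_id_map_some,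
    if_pos ⟨t, ht, hcard, by simpa using htm⟩, msMin,
    dif_pos (Finset.card_pos.1 (hcard ▸ one_pos))]
  simp [Multiset.toFinset_replicate, hm.ne']

lemma update_replicate_of_le {m : ℕ} (hm : ∀ t ∈ R.uniThr, (m : ℝ) ≤ t * n) (x : ℕ) :
    R.update n (Multiset.replicate m (some x)) = none := by
  rw [update, ← Multiset.map_replicate, Multiset.filterMap_id_map_some, if_neg,
    firstMult_eq_none]
  · intro q _ h
    have : (Multiset.replicate m x).toFinset.card ≤ 1 :=
      Finset.card_le_one.2 fun a ha b hb => by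
        simp only [Multiset.mem_toFinset, Multiset.mem_replicate] at ha hb
        rw [ha.2, hb.2]
    omega
  · rintro ⟨t, ht, -, hlt⟩
    exact (hm t ht).not_gt (by simpa using hlt)

lemma update_cons_replicate {v w : ℕ} (hvw : v ≠ w) {m : ℕ} (hm : 0 < m)
    (hM : ∀ q ∈ R.mults, (m + 1 : ℝ) ≤ q.1 * n) :
    R.update n (some w ::ₘ Multiset.replicate m (some v)) = none := by
  have hcard : (w ::ₘ Multiset.replicate m v).toFinset.card = 2 := by
    rw [Multiset.toFinset_cons, Multiset.toFinset_replicate, if_neg hm.ne']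
    simp [Finset.card_insert_of_notMem, hvw.symm]
  rw [update, ← Multiset.map_replicate, ← Multiset.map_cons, Multiset.filterMap_id_map_some,
    if_neg (by rintro ⟨-, -, h, -⟩; omega), firstMult_eq_none]
  intro q hq _
  simpa using hM q hq

end Round

section Fire

variable {R : Round} {φ : RoundPred} {n : ℕ} {f : Fin n → Val}

lemma fire_update (hn : 0 < n) {H : Multiset Val} (hH : H ≤ msetOf f)
    (hφ : ∀ t ∈ φ.thr, t * n < (Multiset.card H : ℝ)) : fire R φ f (R.update n H) :=
  ⟨fun _ => R.update n H, ⟨fun _ => H, fun _ => hH, ⟨fun _ _ _ => rfl, fun t ht _ => hφ t ht⟩,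
    fun _ => rfl⟩, ⟨0, hn⟩, rfl⟩

lemma fire_some_of_lt_count {u : ℝ} (hu : R.uniThr = some u) {v : ℕ}
    (hU : u * n < (msetOf f).count (some v))
    (hφ : φ.thrVal * n < (msetOf f).count (some v)) : fire R φ f (some v) := by
  have hv : 0 < (msetOf f).count (some v) := by
    have := mul_nonneg (R.wfU u hu).1 n.cast_nonneg
    exact_mod_cast this.trans_lt hU
  rw [← R.update_replicate_of_lt hu hv hU v]
  refine fire_update (pos_of_count_msetOf_pos hv) (Multiset.le_count_iff_replicate_le.1 le_rfl) ?_
  intro t ht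
  rwa [Multiset.card_replicate, ← RoundPred.thrVal_eq ht]

lemma fire_none_of_one_value {v m : ℕ} (hn : 0 < n) (hv : m ≤ (msetOf f).count (some v))
    (hφ : ∀ t ∈ φ.thr, t * n < m) (hU : ∀ t ∈ R.uniThr, (m : ℝ) ≤ t * n) :
    fire R φ f none := by
  rw [← R.update_replicate_of_le hU v]
  refine fire_update hn (Multiset.le_count_iff_replicate_le.1 hv) ?_
  simpa using hφ

lemma fire_none_of_two_values {v w m : ℕ} (hvw : v ≠ w) (hm : 0 < m)
    (hv : m ≤ (msetOf f).count (some v)) (hw : 0 < (msetOf f).count (some w))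
    (hφ : ∀ t ∈ φ.thr, t * n < m + 1) (hM : ∀ q ∈ R.mults, (m + 1 : ℝ) ≤ q.1 * n) :
    fire R φ f none := by
  rw [← R.update_cons_replicate hvw hm hM]
  refine fire_update (pos_of_count_msetOf_pos hw) ?_ (by simpa using hφ)
  exact (Multiset.cons_le_of_notMem (by simp [Multiset.mem_replicate, hvw.symm])).2
    ⟨Multiset.count_pos.1 hw, Multiset.le_count_iff_replicate_le.1 hv⟩

end Fire

namespace Round

variable {R : Round} {φ : RoundPred} {u : ℝ}

lemma eventually_fire_none (hu : R.uniThr = some u)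
    (hpres : R.mults = [] ∨ φ.thrVal < max u R.thrM) :
    ∀ᶠ n : ℕ in atTop, ∀ f : Fin n → Val, ∀ v w : ℕ, v ≠ w →
      max u (max R.thrM φ.thrVal) * n < (msetOf f).count (some v) →
      0 < (msetOf f).count (some w) → fire R φ f none := by
  have hu0 := (R.wfU u hu).1
  have below {n : ℕ} {s k : ℝ} (hs : s ≤ max u (max R.thrM φ.thrVal))
      (hk : max u (max R.thrM φ.thrVal) * n < k) : s * n < k :=
    (mul_le_mul_of_nonneg_right hs n.cast_nonneg).trans_lt hk
  rcases hpres with hM | hlt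
  · refine .of_forall fun n f v w hvw hv hw => fire_none_of_two_values hvw ?_ le_rfl hw ?_
      (by simp [hM])
    · exact_mod_cast (mul_nonneg hu0 n.cast_nonneg).trans_lt (below (le_max_left _ _) hv)
    · intro t ht
      have := below (le_max_of_le_right (le_max_right _ _)) hv
      rw [← RoundPred.thrVal_eq ht]
      linarith
  rcases hT : φ.thr with _ | t
  · refine .of_forall fun n f v w _ _ hw =>
      fire_none_of_one_value (v := v) (m := 0) (pos_of_count_msetOf_pos hw) (Nat.zero_le _)
        (by simp [hT]) ?_
    intro t ht
    obtain rfl := Option.mem_unique ht hu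
    simpa using mul_nonneg hu0 n.cast_nonneg
  rw [RoundPred.thrVal_eq hT] at hlt
  have ht0 := (φ.wf t hT).1
  rcases lt_max_iff.1 hlt with htu | htM
  · -- hear `⌊u n⌋` copies of `v`: above `t n` but not above the uni threshold `u n`
    filter_upwards
      [(tendsto_natCast_atTop_atTop.const_mul_atTop (sub_pos.2 htu)).eventually_ge_atTop 1]
      with n hn f v w _ hv hw
    have hun : 0 ≤ u * n := mul_nonneg hu0 n.cast_nonneg
    refine fire_none_of_one_value (v := v) (m := ⌊u * n⌋₊) (pos_of_count_msetOf_pos hw)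
      ?_ ?_ ?_
    · exact_mod_cast ((Nat.floor_le hun).trans (below (le_max_left _ _) hv).le)
    · intro t' ht'
      obtain rfl := Option.mem_unique ht' hT
      linarith [Nat.lt_floor_add_one (u * n)]
    · intro t' ht'
      obtain rfl := Option.mem_unique ht' hu
      exact Nat.floor_le hun
  · -- hear `w` and `⌊thrM n - 1⌋` copies of `v`: above `t n` but no mult threshold reached
    filter_upwards
      [(tendsto_natCast_atTop_atTop.const_mul_atTop (sub_pos.2 htM)).eventually_ge_atTop 2]
      with n hn f v w hvw hv hw
    have htn : 0 ≤ t * n := mul_nonneg ht0 n.cast_nonneg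
    have hm := Nat.floor_le (a := R.thrM * n - 1) (by linarith)
    have hm' := Nat.lt_floor_add_one (R.thrM * n - 1)
    refine fire_none_of_two_values (m := ⌊R.thrM * n - 1⌋₊) hvw ?_ ?_ hw ?_ ?_
    · exact_mod_cast (by linarith : (0 : ℝ) < ⌊R.thrM * n - 1⌋₊)
    · have := below (le_max_of_le_right (le_max_left _ _)) hv
      exact_mod_cast (by linarith : (⌊R.thrM * n - 1⌋₊ : ℝ) ≤ (msetOf f).count (some v))
    · intro t' ht'
      obtain rfl := Option.mem_unique ht' hT
      linarith
    · intro q hq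
      have := mul_le_mul_of_nonneg_right (thrM_le hq) n.cast_nonneg
      linarith

lemma eventually_fire_some_and_none (hu : R.uniThr = some u)
    (hpres : R.mults = [] ∨ φ.thrVal < max u R.thrM) :
    ∀ᶠ n : ℕ in atTop, ∀ f : Fin n → Val, ∀ v w : ℕ, v ≠ w →
      max u (max R.thrM φ.thrVal) * n < (msetOf f).count (some v) →
      0 < (msetOf f).count (some w) → fire R φ f (some v) ∧ fire R φ f none :=
  (eventually_fire_none hu hpres).mono fun n hnone f v w hvw hv hw =>
    ⟨fire_some_of_lt_count hu
      ((mul_le_mul_of_nonneg_right (le_max_left _ _) n.cast_nonneg).trans_lt hv)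
      ((mul_le_mul_of_nonneg_right (le_max_of_le_right (le_max_right _ _))
        n.cast_nonneg).trans_lt hv),
    hnone f v w hvw hv hw⟩

end Round

lemma Algo.preserving.mults_eq_nil_or_thrVal_lt {A : Algo} {ψ : PhasePred} {i : ℕ} {u : ℝ}
    (hp : A.preserving ψ i) (hu : (A.rounds i).uniThr = some u) :
    (A.rounds i).mults = [] ∨ (ψ i).thrVal < max u (A.rounds i).thrM := by
  rcases hp with h | h | h
  · simp [Algo.hasUni, Round.hasUni, hu] at h
  · exact .inl (by simpa [Algo.hasMult, Round.hasMult] using h)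
  · exact .inr (by simpa [Algo.thrU, Algo.thrM, Round.thrU, hu] using h)

namespace isBias

variable {n : ℕ} {θ : ℝ} {f : Fin n → Val}

lemma count_b (hf : isBias θ f) : ((msetOf f).count (some bVal) : ℝ) = θ * n := by
  rw [count_msetOf]; exact hf.2

lemma count_a (hf : isBias θ f) : ((msetOf f).count (some aVal) : ℝ) = (1 - θ) * n := by
  have hneg : Finset.univ.filter (fun p => ¬ f p = some bVal)
      = Finset.univ.filter (fun p => f p = some aVal) :=
    Finset.filter_congr fun p _ => by rcases hf.1 p with h | h <;> simp [h, aVal, bVal]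
  have hsplit : ((Finset.univ.filter fun p => f p = some bVal).card : ℝ)
      + (Finset.univ.filter fun p => f p = some aVal).card = n := by
    rw [← hneg]
    exact_mod_cast (Finset.card_filter_add_card_filter_not _).trans (Finset.card_fin n)
  rw [count_msetOf]
  linarith [hf.2]

end isBias

/-- Lemma 5.  Suppose every round has a uni instruction.  If
round `i` is preserving w.r.t. `ψ` then `{b,?} ⊆ fire_i(bias(θ),ψ)` for all
sufficiently large `θ < 1`, and `{a,?} ⊆ fire_i(bias(θ),ψ)` for all
sufficiently small `θ > 0` (for all sufficiently large `n`). -/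
theorem preserving_fires_b_and_undef (A : Algo)
    (huni : ∀ j, 1 ≤ j → j ≤ A.r → A.hasUni j)
    (ψ : PhasePred) (i : ℕ) (hi : 1 ≤ i) (hir : i ≤ A.r)
    (hp : A.preserving ψ i) :
    (∃ θ₀ : ℝ, θ₀ < 1 ∧ ∀ θ : ℝ, θ₀ ≤ θ → θ < 1 →
      ∃ n₀ : ℕ, ∀ n : ℕ, n₀ ≤ n → ∀ f : Fin n → Val, isBias θ f →
        fire (A.rounds i) (ψ i) f (some bVal) ∧
        fire (A.rounds i) (ψ i) f none) ∧
    (∃ θ₁ : ℝ, 0 < θ₁ ∧ ∀ θ : ℝ, 0 < θ → θ ≤ θ₁ →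
      ∃ n₀ : ℕ, ∀ n : ℕ, n₀ ≤ n → ∀ f : Fin n → Val, isBias θ f →
        fire (A.rounds i) (ψ i) f (some aVal) ∧
        fire (A.rounds i) (ψ i) f none) := by
  obtain ⟨u, hu⟩ := Option.isSome_iff_exists.mp (huni i hi hir)
  set c := max u (max (A.rounds i).thrM (ψ i).thrVal)
  have hc : c < 1 := max_lt ((A.rounds i).wfU u hu).2
    (max_lt (A.rounds i).thrM_lt_one (ψ i).thrVal_lt_one)
  obtain ⟨n₀, hn₀⟩ := eventually_atTop.1 ((Round.eventually_fire_some_and_none hu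
    (hp.mults_eq_nil_or_thrVal_lt hu)).and (eventually_gt_atTop 0))
  constructor
  · obtain ⟨θ₀, hcθ₀, hθ₀⟩ := exists_between hc
    refine ⟨θ₀, hθ₀, fun θ hθ₀θ hθ => ⟨n₀, fun n hn f hf => ?_⟩⟩
    obtain ⟨hfire, hn⟩ := hn₀ n hn
    have hnR : (0 : ℝ) < n := Nat.cast_pos.2 hn
    refine hfire f bVal aVal (by decide) ?_ (Nat.cast_pos (α := ℝ).1 ?_)
    · rw [hf.count_b]; exact mul_lt_mul_of_pos_right (by linarith) hnR
    · rw [hf.count_a]; exact mul_pos (by linarith) hnR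
  · obtain ⟨θ₁, hθ₁, hθ₁c⟩ := exists_between (sub_pos.2 hc)
    refine ⟨θ₁, hθ₁, fun θ hθ hθθ₁ => ⟨n₀, fun n hn f hf => ?_⟩⟩
    obtain ⟨hfire, hn⟩ := hn₀ n hn
    have hnR : (0 : ℝ) < n := Nat.cast_pos.2 hn
    refine hfire f aVal bVal (by decide) ?_ (Nat.cast_pos (α := ℝ).1 ?_)
    · rw [hf.count_a]; exact mul_lt_mul_of_pos_right (by linarith) hnR
    · rw [hf.count_b]; exact mul_pos hθ hnR

end HO
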